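/- arXiv:1711.06194 — 2 statements merged into one kernel-verified Lean document; each statement's English description precedes it below -/
import Mathlib

section
/- If Z = R Rᵀ with R of full column rank m, S is symmetric m×m with largest eigenvalue λ > 0, and ω = −1/λ, then rank(R (I + ω S) Rᵀ) = rank(I + ω S) < m = rank(Z). That is, the update Z ← Z + ω·R S Rᵀ strictly decreases the rank. -/
/-!
Because `R` has full column rank, `x ↦ R x` is injective and `x ↦ Rᵀ x` is surjective, so
multiplying by `R` on the left and by `Rᵀ` on the right preserves the rank of any `m × m`
matrix. An eigenvector `v` of `S` for `λ` satisfies `(I + ω S) v = v - v = 0`, so `I + ω S`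
has a nontrivial kernel and rank below `m`.
-/

open Matrix

namespace Matrix

variable {K : Type*} [Field K] {l m n : Type*} [Fintype m] [Fintype n]

theorem ker_mulVecLin_eq_bot_of_rank_eq_card_width {A : Matrix l n K}
    (hA : A.rank = Fintype.card n) : LinearMap.ker A.mulVecLin = ⊥ := by
  have hrank_nullity := A.mulVecLin.finrank_range_add_finrank_ker
  rw [← rank, hA, Module.finrank_fintype_fun_eq_card] at hrank_nullity
  exact Submodule.finrank_eq_zero.mp (by omega)

theorem range_mulVecLin_eq_top_of_rank_eq_card_height [Fintype l] {A : Matrix l n K}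
    (hA : A.rank = Fintype.card l) : LinearMap.range A.mulVecLin = ⊤ :=
  Submodule.eq_top_of_finrank_eq (by rw [← rank, hA, Module.finrank_fintype_fun_eq_card])

theorem rank_mul_eq_right_of_rank_eq_card_width {A : Matrix l m K}
    (hA : A.rank = Fintype.card m) (B : Matrix m n K) : (A * B).rank = B.rank := by
  rw [rank, rank, mulVecLin_mul, LinearMap.range_comp]
  exact (Submodule.equivMapOfInjective _
    (LinearMap.ker_eq_bot.mp (ker_mulVecLin_eq_bot_of_rank_eq_card_width hA)) _).finrank_eq.symm

theorem rank_mul_eq_left_of_rank_eq_card_height {B : Matrix m n K}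
    (hB : B.rank = Fintype.card m) (A : Matrix l m K) : (A * B).rank = A.rank := by
  rw [rank, rank, mulVecLin_mul,
    LinearMap.range_comp_of_range_eq_top _ (range_mulVecLin_eq_top_of_rank_eq_card_height hB)]

theorem rank_mul_mul_transpose_of_rank_eq_card_width [Fintype l] {R : Matrix l m K}
    (hR : R.rank = Fintype.card m) (A : Matrix m m K) : (R * A * Rᵀ).rank = A.rank := by
  rw [rank_mul_eq_left_of_rank_eq_card_height (by rwa [rank_transpose]),
    rank_mul_eq_right_of_rank_eq_card_width hR]

theorem rank_lt_card_width_of_mulVec_eq_zero {A : Matrix l n K} {v : n → K} (hv : v ≠ 0)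
    (hAv : A *ᵥ v = 0) : A.rank < Fintype.card n := by
  refine (A.rank_le_card_width).lt_of_ne fun hA ↦ hv ?_
  have hv_ker : v ∈ LinearMap.ker A.mulVecLin := by rwa [LinearMap.mem_ker, mulVecLin_apply]
  rwa [ker_mulVecLin_eq_bot_of_rank_eq_card_width hA, Submodule.mem_bot] at hv_ker

theorem one_add_smul_mulVec_eq_zero_of_mulVec_eq_smul [DecidableEq m] {S : Matrix m m K}
    {c : K} {v : m → K} (hSv : S *ᵥ v = c • v) (hc : c ≠ 0) : (1 + (-1 / c) • S) *ᵥ v = 0 := by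
  rw [add_mulVec, one_mulVec, smul_mulVec, hSv, smul_smul, div_mul_cancel₀ _ hc, neg_one_smul,
    add_neg_cancel]

end Matrix

theorem rank_strict_decrease_general (n m : ℕ) (R : Matrix (Fin n) (Fin m) ℝ)
    (hR : R.rank = m) (S : Matrix (Fin m) (Fin m) ℝ)
    (lam : ℝ) (hlam : 0 < lam)
    (hev : ∃ v : Fin m → ℝ, v ≠ 0 ∧ S.mulVec v = lam • v)
    (ω : ℝ) (hω : ω = -1 / lam) :
    (R * (1 + ω • S) * Rᵀ).rank = (1 + ω • S).rank ∧
    ((1 + ω • S) : Matrix (Fin m) (Fin m) ℝ).rank < m ∧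
    (R * Rᵀ).rank = m := by
  have hR_full : R.rank = Fintype.card (Fin m) := by rw [hR, Fintype.card_fin]
  obtain ⟨v, hv, hSv⟩ := hev
  have hker : (1 + ω • S) *ᵥ v = 0 :=
    hω ▸ one_add_smul_mulVec_eq_zero_of_mulVec_eq_smul hSv hlam.ne'
  refine ⟨rank_mul_mul_transpose_of_rank_eq_card_width hR_full _, ?_, ?_⟩
  · simpa using rank_lt_card_width_of_mulVec_eq_zero hv hker
  · rw [rank_self_mul_transpose, hR]

/-- With R of full column rank m and ω = −1/λ_max(S), the update strictly
decreases the rank: rank(R (I + ωS) Rᵀ) = rank(I + ωS) < m = rank(R Rᵀ). -/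
theorem rank_strict_decrease (n m : ℕ) (R : Matrix (Fin n) (Fin m) ℝ)
    (hR : R.rank = m) (S : Matrix (Fin m) (Fin m) ℝ) (hS : S.IsSymm)
    (lam : ℝ) (hlam : 0 < lam)
    (hev : ∃ v : Fin m → ℝ, v ≠ 0 ∧ S.mulVec v = lam • v)
    (hmax : ∀ (μ : ℝ) (v : Fin m → ℝ), v ≠ 0 → S.mulVec v = μ • v → μ ≤ lam)
    (ω : ℝ) (hω : ω = -1 / lam) :
    (R * (1 + ω • S) * Rᵀ).rank = (1 + ω • S).rank ∧
    ((1 + ω • S) : Matrix (Fin m) (Fin m) ℝ).rank < m ∧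
    (R * Rᵀ).rank = m :=
  rank_strict_decrease_general n m R hR S lam hlam hev ω hω
end

section
/- (Barvinok-type bound specialization) Any SDP with k linear equality constraints that has a feasible PSD solution admits a feasible PSD solution of rank r with r(r+1)/2 ≤ k — stated for the case k = 1: if there exists a PSD matrix X with ⟨A, X⟩ = a, then there exists a PSD matrix X' of rank at most 1 with ⟨A, X'⟩ = a. -/
/-!
Write `X = ∑ᵢ vᵢ vᵢᵀ`. Then `⟨A, X⟩ = ∑ᵢ q(vᵢ)` with `q(v) = vᵀ A v`. The range of a real
quadratic form contains `0` and is invariant under scaling by `c ≥ 0`, as `q(√c v) = c q(v)`;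
such a subset of `ℝ` is one of `{0}`, `[0, ∞)`, `(-∞, 0]`, `ℝ`, hence closed under sums.
So `⟨A, X⟩ = q(w)` for some `w`, and `X' = w wᵀ` works.
-/

open Matrix

theorem Real.sum_mem_of_mul_mem {ι : Type*} {S : Set ℝ} (h0 : 0 ∈ S)
    (hmul : ∀ c : ℝ, 0 < c → ∀ x ∈ S, c * x ∈ S) {s : Finset ι} {f : ι → ℝ}
    (hf : ∀ i ∈ s, f i ∈ S) : ∑ i ∈ s, f i ∈ S := by
  rcases lt_trichotomy (∑ i ∈ s, f i) 0 with hneg | hzero | hpos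
  · obtain ⟨i, hi, hfi⟩ :=
      Finset.exists_lt_of_sum_lt (s := s) (f := f) (g := 0) (by simpa using hneg)
    rw [← div_mul_cancel₀ (∑ i ∈ s, f i) hfi.ne]
    exact hmul _ (div_pos_of_neg_of_neg hneg hfi) _ (hf i hi)
  · exact hzero ▸ h0
  · obtain ⟨i, hi, hfi⟩ :=
      Finset.exists_lt_of_sum_lt (s := s) (f := 0) (g := f) (by simpa using hpos)
    rw [← div_mul_cancel₀ (∑ i ∈ s, f i) hfi.ne']
    exact hmul _ (div_pos hpos hfi) _ (hf i hi)

theorem QuadraticMap.sum_mem_range {ι M : Type*} [AddCommGroup M] [Module ℝ M]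
    (Q : QuadraticForm ℝ M) (s : Finset ι) (v : ι → M) :
    ∑ i ∈ s, Q (v i) ∈ Set.range Q := by
  refine Real.sum_mem_of_mul_mem (S := Set.range Q) ⟨0, Q.map_zero⟩ ?_
    fun i _ ↦ ⟨v i, rfl⟩
  rintro c hc _ ⟨x, rfl⟩
  exact ⟨√c • x, by rw [QuadraticMap.map_smul, Real.mul_self_sqrt hc.le, smul_eq_mul]⟩

theorem Matrix.trace_mul_vecMulVec_self {n R : Type*} [Fintype n] [DecidableEq n] [CommRing R]
    (A : Matrix n n R) (v : n → R) : (A * vecMulVec v v).trace = A.toQuadraticForm' v := by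
  rw [mul_vecMulVec, trace_vecMulVec, dotProduct_comm, toQuadraticForm',
    LinearMap.BilinMap.toQuadraticMap_apply, toLinearMap₂'_apply']

theorem barvinok_one_constraint_general (n : ℕ) (A : Matrix (Fin n) (Fin n) ℝ)
    (a : ℝ)
    (h : ∃ X : Matrix (Fin n) (Fin n) ℝ, X.PosSemidef ∧ (A * X).trace = a) :
    ∃ X' : Matrix (Fin n) (Fin n) ℝ, X'.PosSemidef ∧ X'.rank ≤ 1 ∧
      (A * X').trace = a := by
  obtain ⟨X, hX, rfl⟩ := h
  obtain ⟨m, v, rfl⟩ := posSemidef_iff_eq_sum_vecMulVec.mp hX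
  obtain ⟨w, hw⟩ : (A * ∑ i, vecMulVec (v i) (star (v i))).trace ∈
      Set.range A.toQuadraticForm' := by
    simp only [Matrix.mul_sum, trace_sum, star_trivial, trace_mul_vecMulVec_self]
    exact QuadraticMap.sum_mem_range _ _ _
  refine ⟨vecMulVec w w, ?_, rank_vecMulVec_le w w, by rw [trace_mul_vecMulVec_self, hw]⟩
  simpa using posSemidef_vecMulVec_self_star w

/-- Barvinok-type bound for one linear constraint: if some PSD X satisfies
⟨A, X⟩ = a, then some PSD X' of rank at most 1 does too. -/
theorem barvinok_one_constraint (n : ℕ) (A : Matrix (Fin n) (Fin n) ℝ)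
    (hA : A.IsSymm) (a : ℝ)
    (h : ∃ X : Matrix (Fin n) (Fin n) ℝ, X.PosSemidef ∧ (A * X).trace = a) :
    ∃ X' : Matrix (Fin n) (Fin n) ℝ, X'.PosSemidef ∧ X'.rank ≤ 1 ∧
      (A * X').trace = a :=
  barvinok_one_constraint_general n A a h
end
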